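/- Let G = (V, E) be a finite directed graph with lower and upper arc capacities l ≤ u (natural-number valued), disjoint source and sink sets S, T ⊆ V, demand/supply function d : V → ℤ with d < 0 on S, d > 0 on T, d = 0 elsewhere, and −d(S) = d(T). Let Ĝ be the circulation network obtained from G by adding oriented tree arcs with fixed flow values d(V_{T'}(v, w)) as in the Miller–Naor construction, for a tree T' spanning S ∪ T. Let R ⊆ (V ∖ (S ∪ T)) ∪ E be any interdiction set, and let Ĝ(R) denote the graph obtained from Ĝ by removing all arcs of E contained in R and all arcs of E incident to a vertex in R (the added tree arcs are never removed). Let G ∖ R denote the graph obtained from G by removing the arcs and vertices in R (together with all arcs incident to removed vertices). Then G ∖ R admits a saturating flow if and only if Ĝ(R) admits a circulation. -/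

import Mathlib

open scoped Classical

/-- Net outflow of the function `f` at the vertex `v` in the directed graph whose arcs
are the elements of `E`, with tails `esrc` and heads `edst`. -/
noncomputable def netOutflow {V E : Type*} [Fintype E] (esrc edst : E → V)
    (f : E → ℝ) (v : V) : ℝ :=
  (∑ e ∈ Finset.univ.filter (fun e => esrc e = v), f e) -
    ∑ e ∈ Finset.univ.filter (fun e => edst e = v), f e

/-- A saturating flow: the flow respects the lower and upper capacities and every vertex
`v` has net outflow `-d v`. -/
def IsSaturatingFlow {V E : Type*} [Fintype E] (esrc edst : E → V)
    (l u : E → ℕ) (d : V → ℤ) (f : E → ℝ) : Prop :=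
  (∀ e, (l e : ℝ) ≤ f e ∧ f e ≤ (u e : ℝ)) ∧
  ∀ v, netOutflow esrc edst f v = -(d v : ℝ)

/-- A circulation: the flow respects the lower and upper bounds and is conserved at
every vertex. -/
def IsCirculation {V E : Type*} [Fintype E] (esrc edst : E → V)
    (lo hi : E → ℤ) (g : E → ℝ) : Prop :=
  (∀ e, (lo e : ℝ) ≤ g e ∧ g e ≤ (hi e : ℝ)) ∧
  ∀ v, netOutflow esrc edst g v = 0

/-- `treeSide Tr d v w` is `d(V_{T'}(v, w))`: the sum of the demands over the set of
vertices that remain connected to `v` in the tree `Tr` after deleting the edge `{v, w}`. -/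
noncomputable def treeSide {V : Type*} [Fintype V] (Tr : SimpleGraph V) (d : V → ℤ)
    (v w : V) : ℤ :=
  ∑ x ∈ Finset.univ.filter
      (fun x => (Tr.deleteEdges {Sym2.mk v w}).Reachable v x), d x

/-- The arcs obtained by orienting the edges of the tree `Tr`: the edge `{v, w}` is
oriented from `v` to `w` if `d(V_{T'}(v, w)) ≥ 0` and from `w` to `v` otherwise
(breaking ties, when `d(V_{T'}(v, w)) = 0`, by the linear order on `V`). -/
def TreeArc {V : Type*} [Fintype V] [LinearOrder V] (Tr : SimpleGraph V) (d : V → ℤ) :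
    Type _ :=
  {q : V × V // Tr.Adj q.1 q.2 ∧ 0 ≤ treeSide Tr d q.1 q.2 ∧
    (treeSide Tr d q.1 q.2 = 0 → q.1 ≤ q.2)}

noncomputable instance {V : Type*} [Fintype V] [LinearOrder V] (Tr : SimpleGraph V)
    (d : V → ℤ) : Fintype (TreeArc Tr d) := by
  unfold TreeArc; infer_instance


/-!
Every edge of a forest is a bridge, so the component of a vertex `v` is the disjoint union of
`{v}` and the far sides of the edges at `v`, and the two sides of an edge `{v, w}` partition the
component. When every component has total demand zero, this makes `d(V_{T'}(v, w))`
antisymmetric in `(v, w)`, and summing over the edges at `v` shows that the tree arcs, carrying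
their fixed values, have net outflow exactly `d v` at every vertex `v`. Hence adding them to a
saturating flow of `G ∖ R` gives a circulation of `Ĝ(R)` and, conversely, the `G`-part of a
circulation is a saturating flow. Interdicted vertices carry neither demand nor arcs of `G ∖ R`,
so they do not affect either side.
-/

open Finset

namespace SimpleGraph

variable {V : Type*} {G : SimpleGraph V} {v w x : V}

lemma reachable_deleteEdges_or (h : G.Reachable v x) :
    (G.deleteEdges {s(v, w)}).Reachable v x ∨ (G.deleteEdges {s(v, w)}).Reachable w x := by
  rw [reachable_iff_reflTransGen] at h
  induction h with
  | refl => exact .inl .rfl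
  | @tail b c _ hbc ih =>
    by_cases he : s(b, c) = s(v, w)
    · rcases Sym2.eq_iff.mp he with ⟨-, rfl⟩ | ⟨-, rfl⟩
      · exact .inr .rfl
      · exact .inl .rfl
    · have hH : (G.deleteEdges {s(v, w)}).Adj b c := deleteEdges_adj.mpr ⟨hbc, he⟩
      exact ih.imp (·.trans hH.reachable) (·.trans hH.reachable)

lemma IsAcyclic.not_reachable_deleteEdges (hG : G.IsAcyclic) (h : G.Adj v w) :
    ¬ (G.deleteEdges {s(v, w)}).Reachable v w :=
  isAcyclic_iff_forall_adj_isBridge.mp hG h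

lemma IsAcyclic.exists_walk_notMem_support (hG : G.IsAcyclic) (h : G.Adj v w)
    (hx : (G.deleteEdges {s(w, v)}).Reachable w x) : ∃ p : G.Walk w x, v ∉ p.support := by
  classical
  obtain ⟨q⟩ := hx
  refine ⟨q.mapLe (deleteEdges_le _), fun hv => ?_⟩
  rw [Walk.support_mapLe_eq_support] at hv
  exact hG.not_reachable_deleteEdges h.symm (q.takeUntil v hv).reachable

variable [Fintype V] [DecidableEq V]

lemma IsAcyclic.treeSide_add_treeSide (hG : G.IsAcyclic) (h : G.Adj v w) (d : V → ℤ) :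
    treeSide G d v w + treeSide G d w v = ∑ x ∈ univ.filter (G.Reachable v), d x := by
  have hsplit : univ.filter (G.Reachable v) =
      univ.filter ((G.deleteEdges {s(v, w)}).Reachable v) ∪
        univ.filter ((G.deleteEdges {s(v, w)}).Reachable w) := by
    ext x
    simp only [mem_union, mem_filter, mem_univ, true_and]
    refine ⟨reachable_deleteEdges_or, ?_⟩
    rintro (hx | hx)
    · exact hx.mono (deleteEdges_le _)
    · exact h.reachable.trans (hx.mono (deleteEdges_le _))
  rw [hsplit, sum_union (disjoint_filter.mpr fun x _ hv hw =>
    hG.not_reachable_deleteEdges h (hv.trans hw.symm)), treeSide, treeSide, Sym2.eq_swap (a := w)]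
  -- the two sides differ only in their `Decidable` instances: `treeSide` is elaborated classically
  convert rfl

lemma filter_reachable_eq_insert_biUnion (v : V) :
    univ.filter (G.Reachable v) = insert v ((univ.filter (G.Adj v)).biUnion
      fun w => univ.filter ((G.deleteEdges {s(w, v)}).Reachable w)) := by
  ext x
  simp only [mem_filter, mem_univ, true_and, mem_insert, mem_biUnion]
  constructor
  · intro hx
    obtain ⟨p, hp⟩ := hx.some.toPath
    cases p with
    | nil => exact .inl rfl
    | @cons _ w _ hvw q =>
      rw [Walk.cons_isPath_iff] at hp
      exact .inr ⟨w, hvw, reachable_deleteEdges_iff_exists_walk.mpr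
        ⟨q, fun he => hp.2 (q.snd_mem_support_of_mem_edges he)⟩⟩
  · rintro (rfl | ⟨w, hvw, hx⟩)
    · exact .rfl
    · exact hvw.reachable.trans (hx.mono (deleteEdges_le _))

lemma IsAcyclic.pairwiseDisjoint_filter_reachable_deleteEdges (hG : G.IsAcyclic) (v : V) :
    (univ.filter (G.Adj v) : Set V).PairwiseDisjoint
      fun w => univ.filter ((G.deleteEdges {s(w, v)}).Reachable w) := by
  intro w₁ h₁ w₂ h₂ hne
  simp only [coe_filter, mem_univ, true_and, Set.mem_ofPred_eq] at h₁ h₂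
  refine disjoint_filter.mpr fun x _ hx₁ hx₂ => ?_
  obtain ⟨p, hp⟩ := hG.exists_walk_notMem_support h₂ hx₂
  have hpx : (G.deleteEdges {s(w₁, v)}).Reachable w₂ x :=
    reachable_deleteEdges_iff_exists_walk.mpr
      ⟨p, fun he => hp (p.snd_mem_support_of_mem_edges he)⟩
  have hvw₂ : (G.deleteEdges {s(w₁, v)}).Adj v w₂ :=
    deleteEdges_adj.mpr ⟨h₂, by simpa [Sym2.eq_swap, eq_comm, h₂.ne] using hne⟩
  exact hG.not_reachable_deleteEdges h₁.symm
    (hvw₂.reachable.trans (hpx.trans hx₁.symm)).symm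

lemma IsAcyclic.add_sum_treeSide (hG : G.IsAcyclic) (d : V → ℤ) (v : V) :
    d v + ∑ w ∈ univ.filter (G.Adj v), treeSide G d w v =
      ∑ x ∈ univ.filter (G.Reachable v), d x := by
  have hv : v ∉ (univ.filter (G.Adj v)).biUnion
      fun w => univ.filter ((G.deleteEdges {s(w, v)}).Reachable w) := by
    simp only [mem_biUnion, mem_filter, mem_univ, true_and, not_exists, not_and]
    exact fun w hvw => hG.not_reachable_deleteEdges hvw.symm
  rw [filter_reachable_eq_insert_biUnion, sum_insert hv,
    sum_biUnion (hG.pairwiseDisjoint_filter_reachable_deleteEdges v)]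
  simp only [treeSide]
  convert rfl

variable {d : V → ℤ}

lemma sum_filter_reachable_eq_zero {S T : Finset V} (hST : Disjoint S T)
    (hd0 : ∀ v, v ∉ S → v ∉ T → d v = 0) (hbal : -(∑ s ∈ S, d s) = ∑ t ∈ T, d t)
    (hconn : ∀ a ∈ G.support ∪ ↑S ∪ ↑T, ∀ b ∈ G.support ∪ ↑S ∪ ↑T, G.Reachable a b) (v : V) :
    ∑ x ∈ univ.filter (G.Reachable v), d x = 0 := by
  by_cases hterm : ∃ t ∈ S ∪ T, G.Reachable v t
  · obtain ⟨t, ht, hvt⟩ := hterm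
    have hmem : ∀ x ∈ S ∪ T, x ∈ G.support ∪ ↑S ∪ ↑T := fun x hx => by
      simpa [or_assoc] using Or.inr (mem_union.mp hx)
    have hsub : S ∪ T ⊆ univ.filter (G.Reachable v) := fun x hx =>
      mem_filter.mpr ⟨mem_univ x, hvt.trans (hconn t (hmem t ht) x (hmem x hx))⟩
    rw [← sum_subset hsub fun x _ hx => hd0 x (fun h => hx (mem_union_left T h))
      (fun h => hx (mem_union_right S h)), sum_union hST]
    linarith
  · simp only [not_exists, not_and] at hterm
    refine sum_eq_zero fun x hx => hd0 x (fun h => ?_) (fun h => ?_)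
    · exact hterm x (mem_union_left T h) (mem_filter.mp hx).2
    · exact hterm x (mem_union_right S h) (mem_filter.mp hx).2

lemma IsAcyclic.treeSide_swap (hG : G.IsAcyclic)
    (hd : ∀ v, ∑ x ∈ univ.filter (G.Reachable v), d x = 0) {v w : V} (h : G.Adj v w) :
    treeSide G d w v = -treeSide G d v w := by
  linarith [hG.treeSide_add_treeSide h d, hd v]

lemma IsAcyclic.sum_treeSide (hG : G.IsAcyclic)
    (hd : ∀ v, ∑ x ∈ univ.filter (G.Reachable v), d x = 0) (v : V) :
    ∑ w ∈ univ.filter (G.Adj v), treeSide G d v w = d v := by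
  have hsum := hG.add_sum_treeSide d v
  rw [sum_congr rfl fun w hw => hG.treeSide_swap hd (mem_filter.mp hw).2, sum_neg_distrib,
    hd v] at hsum
  linarith

end SimpleGraph

section Flows

variable {V E F : Type*} [Fintype E]

lemma netOutflow_sum_elim [Fintype F] (s₁ t₁ : E → V) (s₂ t₂ : F → V) (g₁ : E → ℝ)
    (g₂ : F → ℝ) (v : V) :
    netOutflow (Sum.elim s₁ s₂) (Sum.elim t₁ t₂) (Sum.elim g₁ g₂) v =
      netOutflow s₁ t₁ g₁ v + netOutflow s₂ t₂ g₂ v := by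
  simp only [netOutflow, sum_filter, Fintype.sum_sum_type, Sum.elim_inl, Sum.elim_inr]
  grind

lemma netOutflow_subtype_prod [Fintype V] {P : V × V → Prop} [Fintype {p // P p}]
    (c : V × V → ℝ) (v : V) :
    netOutflow (fun q : {p // P p} => q.val.1) (fun q => q.val.2) (fun q => c q.val) v =
      ∑ w, ((if P (v, w) then c (v, w) else 0) - if P (w, v) then c (w, v) else 0) := by
  simp only [netOutflow, sum_filter]
  rw [← sum_subtype (univ.filter P) (by simp) (fun p => if p.1 = v then c p else 0),
    ← sum_subtype (univ.filter P) (by simp) (fun p => if p.2 = v then c p else 0),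
    sum_filter, sum_filter, Fintype.sum_prod_type, Fintype.sum_prod_type, sum_sub_distrib]
  simp only [← ite_and, and_comm (a := P _)]
  simp [ite_and, sum_ite_irrel]

lemma netOutflow_eq_zero_of_forall_ne {esrc edst : E → V} (f : E → ℝ) {v : V}
    (hs : ∀ e, esrc e ≠ v) (ht : ∀ e, edst e ≠ v) : netOutflow esrc edst f v = 0 := by
  simp [netOutflow, filter_eq_empty_iff.mpr fun e _ => hs e,
    filter_eq_empty_iff.mpr fun e _ => ht e]

lemma isSaturatingFlow_subtype_iff {p : V → Prop} {esrc edst : E → V}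
    (hs : ∀ e, p (esrc e)) (ht : ∀ e, p (edst e)) (l u : E → ℕ) {d : V → ℤ}
    (hd : ∀ v, ¬ p v → d v = 0) (f : E → ℝ) :
    IsSaturatingFlow (fun e => (⟨esrc e, hs e⟩ : Subtype p)) (fun e => ⟨edst e, ht e⟩) l u
        (fun v => d v.1) f ↔ IsSaturatingFlow esrc edst l u d f := by
  have hrestrict : ∀ v (hv : p v), netOutflow (fun e => (⟨esrc e, hs e⟩ : Subtype p))
      (fun e => ⟨edst e, ht e⟩) f ⟨v, hv⟩ = netOutflow esrc edst f v := by
    simp [netOutflow]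
  refine and_congr_right fun _ => ⟨fun h v => ?_, fun h v => ?_⟩
  · by_cases hv : p v
    · rw [← hrestrict v hv, h]
    · rw [netOutflow_eq_zero_of_forall_ne f (fun e (he : esrc e = v) => hv (he ▸ hs e))
        (fun e (he : edst e = v) => hv (he ▸ ht e)), hd v hv, Int.cast_zero, neg_zero]
  · rw [hrestrict, h]

lemma exists_isSaturatingFlow_iff_exists_isCirculation [Fintype F] {esrc edst : E → V}
    {l u : E → ℕ} {d : V → ℤ} {fsrc fdst : F → V} {c : F → ℤ}
    (hc : ∀ v, netOutflow fsrc fdst (fun a => (c a : ℝ)) v = d v) :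
    (∃ f, IsSaturatingFlow esrc edst l u d f) ↔
      ∃ g, IsCirculation (Sum.elim esrc fsrc) (Sum.elim edst fdst)
        (Sum.elim (fun e => (l e : ℤ)) c) (Sum.elim (fun e => (u e : ℤ)) c) g := by
  constructor
  · rintro ⟨f, hbound, hcons⟩
    refine ⟨Sum.elim f fun a => (c a : ℝ), ?_, fun v => ?_⟩
    · rintro (e | a)
      · simpa using hbound e
      · simp
    · rw [netOutflow_sum_elim, hcons, hc]
      ring
  · rintro ⟨g, hbound, hcons⟩
    have hfixed : g ∘ Sum.inr = fun a => (c a : ℝ) :=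
      funext fun a => le_antisymm (hbound (.inr a)).2 (hbound (.inr a)).1
    refine ⟨g ∘ Sum.inl, fun e => by simpa using hbound (.inl e), fun v => ?_⟩
    have hv := hcons v
    rw [← Sum.elim_comp_inl_inr g, netOutflow_sum_elim, hfixed, hc] at hv
    linarith

end Flows

-- Exactly one orientation of the edge `{x, y}` is a tree arc; either way it adds `a` to the
-- net outflow at `x`.
lemma ite_orient_sub_ite_orient {α : Type*} [LinearOrder α] {x y : α} (hxy : x ≠ y)
    {a b : ℤ} (hab : b = -a) :
    ((if 0 ≤ a ∧ (a = 0 → x ≤ y) then (a : ℝ) else 0) -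
      if 0 ≤ b ∧ (b = 0 → y ≤ x) then (b : ℝ) else 0) = a := by
  subst hab
  split_ifs with h₁ h₂ h₂
  · exact absurd (le_antisymm (h₁.2 (by omega)) (h₂.2 (by omega))) hxy
  · simp
  · push_cast; ring
  · rcases le_total x y with h | h
    · exact absurd ⟨by omega, fun _ => h⟩ h₁
    · exact absurd ⟨by omega, fun _ => h⟩ h₂

lemma SimpleGraph.IsAcyclic.netOutflow_treeArc {V : Type*} [Fintype V] [LinearOrder V]
    {G : SimpleGraph V} (hG : G.IsAcyclic) {d : V → ℤ}
    (hd : ∀ v, ∑ x ∈ univ.filter (G.Reachable v), d x = 0) (v : V) :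
    netOutflow (fun q : TreeArc G d => q.val.1) (fun q => q.val.2)
      (fun q => (treeSide G d q.val.1 q.val.2 : ℝ)) v = d v := by
  refine (netOutflow_subtype_prod (fun p => (treeSide G d p.1 p.2 : ℝ)) v).trans ?_
  rw [← hG.sum_treeSide hd v, Int.cast_sum, sum_filter]
  refine sum_congr rfl fun w _ => ?_
  by_cases h : G.Adj v w
  · simp only [h, h.symm, true_and, if_true]
    exact ite_orient_sub_ite_orient h.ne (hG.treeSide_swap hd h)
  · simp [h, h.imp G.adj_symm]

theorem statement3_general {V E : Type*} [Fintype V] [LinearOrder V] [Fintype E] [DecidableEq E]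
    (esrc edst : E → V) (l u : E → ℕ)
    (S T : Finset V) (hST : Disjoint S T) (d : V → ℤ)
    (hd0 : ∀ v, v ∉ S → v ∉ T → d v = 0)
    (hbal : -(∑ s ∈ S, d s) = ∑ t ∈ T, d t)
    (Tr : SimpleGraph V) (hacyc : Tr.IsAcyclic)
    (hconn : ∀ a ∈ Tr.support ∪ ↑S ∪ ↑T, ∀ b ∈ Tr.support ∪ ↑S ∪ ↑T, Tr.Reachable a b)
    (RV : Finset V) (RE : Finset E) (hRV : ∀ v ∈ RV, v ∉ S ∧ v ∉ T) :
    (∃ f : {e : E // e ∉ RE ∧ esrc e ∉ RV ∧ edst e ∉ RV} → ℝ,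
      IsSaturatingFlow
        (fun e => (⟨esrc e.1, e.2.2.1⟩ : {v : V // v ∉ RV}))
        (fun e => (⟨edst e.1, e.2.2.2⟩ : {v : V // v ∉ RV}))
        (fun e => l e.1) (fun e => u e.1) (fun v => d v.1) f) ↔
    (∃ g : ({e : E // e ∉ RE ∧ esrc e ∉ RV ∧ edst e ∉ RV} ⊕ TreeArc Tr d) → ℝ,
      IsCirculation
        (Sum.elim (fun e => esrc e.1) (fun q => q.val.1))
        (Sum.elim (fun e => edst e.1) (fun q => q.val.2))
        (Sum.elim (fun e => (l e.1 : ℤ)) (fun q => treeSide Tr d q.val.1 q.val.2))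
        (Sum.elim (fun e => (u e.1 : ℤ)) (fun q => treeSide Tr d q.val.1 q.val.2))
        g) := by
  have hflux :=
    hacyc.netOutflow_treeArc (SimpleGraph.sum_filter_reachable_eq_zero hST hd0 hbal hconn)
  have hdRV : ∀ v, ¬ v ∉ RV → d v = 0 := fun v hv =>
    hd0 v (hRV v (not_not.mp hv)).1 (hRV v (not_not.mp hv)).2
  refine Iff.trans ?_ (exists_isSaturatingFlow_iff_exists_isCirculation hflux)
  exact exists_congr fun f => isSaturatingFlow_subtype_iff _ _ _ _ hdRV f

/-- Interdicted Miller–Naor reduction: for any interdiction set `R` consisting of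
non-terminal vertices `RV` and arcs `RE`, the interdicted network `G ∖ R` (obtained by
removing the vertices of `RV`, the arcs of `RE` and all arcs incident to `RV`) admits a
saturating flow if and only if the interdicted circulation network `Ĝ(R)` (obtained from
`Ĝ` by removing the arcs of `RE` and the arcs incident to `RV`, but keeping all added
tree arcs) admits a circulation. -/
theorem statement3 {V E : Type*} [Fintype V] [LinearOrder V] [Fintype E] [DecidableEq E]
    (esrc edst : E → V) (l u : E → ℕ) (hlu : ∀ e, l e ≤ u e)
    (S T : Finset V) (hST : Disjoint S T) (d : V → ℤ)
    (hdS : ∀ s ∈ S, d s < 0) (hdT : ∀ t ∈ T, 0 < d t)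
    (hd0 : ∀ v, v ∉ S → v ∉ T → d v = 0)
    (hbal : -(∑ s ∈ S, d s) = ∑ t ∈ T, d t)
    (Tr : SimpleGraph V) (hacyc : Tr.IsAcyclic)
    (hconn : ∀ a ∈ Tr.support ∪ ↑S ∪ ↑T, ∀ b ∈ Tr.support ∪ ↑S ∪ ↑T, Tr.Reachable a b)
    (hnew : ∀ e : E, ¬ Tr.Adj (esrc e) (edst e))
    (RV : Finset V) (RE : Finset E) (hRV : ∀ v ∈ RV, v ∉ S ∧ v ∉ T) :
    (∃ f : {e : E // e ∉ RE ∧ esrc e ∉ RV ∧ edst e ∉ RV} → ℝ,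
      IsSaturatingFlow
        (fun e => (⟨esrc e.1, e.2.2.1⟩ : {v : V // v ∉ RV}))
        (fun e => (⟨edst e.1, e.2.2.2⟩ : {v : V // v ∉ RV}))
        (fun e => l e.1) (fun e => u e.1) (fun v => d v.1) f) ↔
    (∃ g : ({e : E // e ∉ RE ∧ esrc e ∉ RV ∧ edst e ∉ RV} ⊕ TreeArc Tr d) → ℝ,
      IsCirculation
        (Sum.elim (fun e => esrc e.1) (fun q => q.val.1))
        (Sum.elim (fun e => edst e.1) (fun q => q.val.2))
        (Sum.elim (fun e => (l e.1 : ℤ)) (fun q => treeSide Tr d q.val.1 q.val.2))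
        (Sum.elim (fun e => (u e.1 : ℤ)) (fun q => treeSide Tr d q.val.1 q.val.2))
        g) :=
  statement3_general esrc edst l u S T hST d hd0 hbal Tr hacyc hconn RV RE hRV
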